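/- The optimal Steiner-flow cost function satisfies the edge-extension recurrence: H(v, S) ≤ H(u, S) + (max_{d ∈ S} x(d)) · e(v, u) for every edge {v, u} ∈ E. -/

import Mathlib

/-!
Given a tree rooted at `u` that spans `S`, make `v` the new root: add the edge `(v, u)` and drop
the old parent edge of `v`, if any, so that the subtree of `v` now hangs directly below the root.
The set of destinations below any other vertex can only shrink, so each old edge is charged at
most as before, and the new edge is charged at most `max_{d ∈ S} x d`. Since `delta` takes the
value `sInf ∅ = 0` when no spanning tree exists, one also needs the converse existence: the same
construction along the reversed edge `(u, v)` turns a tree rooted at `v` into one rooted at `u`.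
-/

namespace OST

variable {V : Type} [DecidableEq V]

/-- A feasible flow for the outflow-constrained minimum flow problem. -/
structure Feasible (E : V → V → Prop) (s : V) (D : Set V) (x : V → ℝ)
    (f : V → V → ℝ) : Prop where
  nonneg : ∀ i j, 0 ≤ f i j
  support : ∀ i j, ¬ E i j → f i j = 0
  /-- at every non-source node, every outflow value is bounded by some inflow value
      (max outflow ≤ max inflow) -/
  conserve : ∀ i, i ≠ s → ∀ j, ∃ k, f i j ≤ f k i
  /-- every destination receives inflow at least its demand -/
  demand : ∀ d ∈ D, ∃ i, x d ≤ f i d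

/-- Total weighted cost of a flow. -/
noncomputable def cost [Fintype V] (e f : V → V → ℝ) : ℝ :=
  ∑ i, ∑ j, e i j * f i j

/-- The (undirected) flow-carrying edge relation. -/
def carry (f : V → V → ℝ) (a b : V) : Prop := 0 < f a b ∨ 0 < f b a

/-- Directed reachability inside a set of directed edges. -/
def reach (T : Set (V × V)) (a b : V) : Prop :=
  Relation.ReflTransGen (fun p q => (p, q) ∈ T) a b

/-- `T` is a tree rooted at `v`, edges directed away from the root. -/
structure IsRootedTree (E : V → V → Prop) (v : V) (T : Set (V × V)) : Prop where
  edges : ∀ p ∈ T, E p.1 p.2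
  parent_unique : ∀ u u' w, (u, w) ∈ T → (u', w) ∈ T → u = u'
  root_no_parent : ∀ u, (u, v) ∉ T
  reach_root : ∀ p ∈ T, reach T v p.1

/-- The rooted edge set `T` connects `v` to every node of `S`. -/
def Spans (T : Set (V × V)) (v : V) (S : Set V) : Prop := ∀ d ∈ S, reach T v d

/-- Maximum demand among destinations of `S` lying below node `w` in `T`
    (`0` if there are none, by convention of `sSup` on `ℝ`). -/
noncomputable def maxBelow (T : Set (V × V)) (S : Set V) (x : V → ℝ) (w : V) : ℝ :=
  sSup (x '' {d ∈ S | reach T w d})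

/-- Steiner-flow cost of a rooted tree: each edge is charged its weight times the
    maximum demand among destinations of `S` below it. -/
noncomputable def treeCost (e : V → V → ℝ) (x : V → ℝ) (S : Set V)
    (T : Finset (V × V)) : ℝ :=
  ∑ p ∈ T, e p.1 p.2 * maxBelow (↑T) S x p.2

/-- Minimum Steiner-flow cost from root `v` to destination set `S`. -/
noncomputable def delta (E : V → V → Prop) (e : V → V → ℝ) (x : V → ℝ)
    (v : V) (S : Set V) : ℝ :=
  sInf {c | ∃ T : Finset (V × V),
    IsRootedTree E v ↑T ∧ Spans (↑T) v S ∧ c = treeCost e x S T}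

/-- `l` lists the successive vertices of a walk starting at the given vertex. -/
def IsWalk (R : V → V → Prop) : V → List V → Prop
  | _, [] => True
  | a, b :: l => R a b ∧ IsWalk R b l

/-- Total edge weight of a walk. -/
noncomputable def walkCost (e : V → V → ℝ) : V → List V → ℝ
  | _, [] => 0
  | a, b :: l => e a b + walkCost e b l

/-- Weighted shortest-path distance. -/
noncomputable def dist (E : V → V → Prop) (e : V → V → ℝ) (a b : V) : ℝ :=
  sInf {c | ∃ l : List V, IsWalk E a l ∧
    (a :: l).getLast (List.cons_ne_nil a l) = b ∧ c = walkCost e a l}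

/-- Hop distance in a directed relation. -/
noncomputable def hopDist (R : V → V → Prop) (a b : V) : ℕ :=
  sInf {n | ∃ l : List V, IsWalk R a l ∧
    (a :: l).getLast (List.cons_ne_nil a l) = b ∧ l.length = n}

/-- A feasible flow supported on the rooted tree `T`. -/
structure TreeFeasible (T : Set (V × V)) (D : Set V) (x : V → ℝ)
    (f : V → V → ℝ) : Prop where
  nonneg : ∀ i j, 0 ≤ f i j
  support : ∀ i j, (i, j) ∉ T → f i j = 0
  /-- flow is nonincreasing away from the root -/
  mono : ∀ u w z, (u, w) ∈ T → (w, z) ∈ T → f w z ≤ f u w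
  /-- each destination's parent edge carries at least its demand -/
  demand : ∀ d ∈ D, ∀ u, (u, d) ∈ T → x d ≤ f u d

end OST

namespace OST

variable {V : Type}

lemma sSup_image_le_sSup_image {α : Type*} {x : α → ℝ} {s t : Set α} (hst : s ⊆ t)
    (ht : t.Finite) (hx : ∀ d ∈ t, 0 ≤ x d) : sSup (x '' s) ≤ sSup (x '' t) :=
  Real.sSup_le
    (Set.forall_mem_image.2 fun _ hd => le_csSup (ht.image x).bddAbove ⟨_, hst hd, rfl⟩)
    (Real.sSup_nonneg (Set.forall_mem_image.2 hx))

lemma sInf_le_sInf_add {A B : Set ℝ} {c : ℝ} (hA : BddBelow A) (hc : 0 ≤ c)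
    (hAB : A.Nonempty → B.Nonempty) (h : ∀ b ∈ B, ∃ a ∈ A, a ≤ b + c) :
    sInf A ≤ sInf B + c := by
  rcases B.eq_empty_or_nonempty with rfl | hB
  · rw [Set.not_nonempty_iff_eq_empty.1 (mt hAB Set.not_nonempty_empty), Real.sInf_empty,
      zero_add]
    exact hc
  · suffices sInf A - c ≤ sInf B by linarith
    refine le_csInf hB fun b hb => ?_
    obtain ⟨a, ha, hab⟩ := h b hb
    linarith [csInf_le hA ha]

section maxBelow

variable {S : Set V} {x : V → ℝ}

lemma maxBelow_nonneg (hx : ∀ d ∈ S, 0 ≤ x d) (T : Set (V × V)) (w : V) :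
    0 ≤ maxBelow T S x w :=
  Real.sSup_nonneg (Set.forall_mem_image.2 fun d hd => hx d hd.1)

lemma maxBelow_le_sSup (hS : S.Finite) (hx : ∀ d ∈ S, 0 ≤ x d) (T : Set (V × V)) (w : V) :
    maxBelow T S x w ≤ sSup (x '' S) :=
  sSup_image_le_sSup_image (Set.sep_subset S _) hS hx

end maxBelow

lemma treeCost_nonneg {E : V → V → Prop} {e : V → V → ℝ} {x : V → ℝ} {S : Set V}
    {w : V} {T : Finset (V × V)} (he : ∀ i j, E i j → 0 ≤ e i j)
    (hx : ∀ d ∈ S, 0 ≤ x d) (hT : IsRootedTree E w ↑T) : 0 ≤ treeCost e x S T :=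
  Finset.sum_nonneg fun p hp =>
    mul_nonneg (he _ _ (hT.edges p hp)) (maxBelow_nonneg hx _ _)

variable [DecidableEq V]

lemma finite_setOf_reach (T : Finset (V × V)) (w : V) : {d | reach (↑T) w d}.Finite := by
  refine ((↑(T.image Prod.snd) : Set V).toFinite.insert w).subset fun d hd => ?_
  rcases Relation.ReflTransGen.cases_tail hd with rfl | ⟨c, -, hc⟩
  · exact Set.mem_insert d _
  · exact Or.inr (Finset.mem_coe.2 (Finset.mem_image_of_mem Prod.snd hc))

lemma maxBelow_le_maxBelow_of_reach {S : Set V} {x : V → ℝ} {T : Set (V × V)}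
    {T' : Finset (V × V)} {w : V} (hx : ∀ d ∈ S, 0 ≤ x d)
    (h : ∀ d, reach T w d → reach (↑T') w d) :
    maxBelow T S x w ≤ maxBelow (↑T') S x w :=
  sSup_image_le_sSup_image (fun d hd => ⟨hd.1, h d hd.2⟩)
    ((finite_setOf_reach T' w).subset fun _ hd => hd.2) fun d hd => hx d hd.1

def attachRoot (v u : V) (T : Finset (V × V)) : Finset (V × V) :=
  insert (v, u) (T.filter fun p => p.2 ≠ v)

section attachRoot

variable {v u : V} {T : Finset (V × V)}

lemma mem_attachRoot {p : V × V} :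
    p ∈ attachRoot v u T ↔ p = (v, u) ∨ p ∈ T ∧ p.2 ≠ v := by
  simp only [attachRoot, Finset.mem_insert, Finset.mem_filter]

lemma reach_attachRoot_of_reach {a d : V} (h : reach (↑T) a d) :
    reach (↑(attachRoot v u T)) a d ∨ reach (↑(attachRoot v u T)) v d := by
  induction h using Relation.ReflTransGen.head_induction_on with
  | refl => exact Or.inl .refl
  | @head a b hab _ ih =>
    rcases eq_or_ne b v with rfl | hb
    · exact Or.inr (ih.elim id id)
    · exact ih.imp_left (.head (mem_attachRoot.2 (Or.inr ⟨hab, hb⟩)))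

lemma reach_attachRoot_root {d : V} (h : reach (↑T) u d) : reach (↑(attachRoot v u T)) v d :=
  (reach_attachRoot_of_reach h).elim
    (.head (mem_attachRoot.2 (Or.inl rfl))) id

-- No edge of `attachRoot v u T` enters `v`, so a path avoiding the root uses only edges of `T`.
lemma reach_of_reach_attachRoot {w d : V} (hw : w ≠ v) (h : reach (↑(attachRoot v u T)) w d) :
    reach (↑T) w d := by
  induction h using Relation.ReflTransGen.head_induction_on with
  | refl => exact .refl
  | @head a b hab _ ih =>
    rcases mem_attachRoot.1 hab with hab | ⟨hab, hb⟩
    · exact absurd (congrArg Prod.fst hab) hw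
    · exact (ih hb).head hab

variable {E : V → V → Prop}

lemma isRootedTree_attachRoot (hT : IsRootedTree E u ↑T) (hvu : E v u) (hne : v ≠ u) :
    IsRootedTree E v ↑(attachRoot v u T) where
  edges p hp := by
    rcases mem_attachRoot.1 hp with rfl | ⟨hp, -⟩
    exacts [hvu, hT.edges p hp]
  parent_unique a a' w ha ha' := by
    rcases mem_attachRoot.1 ha with ha | ⟨ha, -⟩ <;>
      rcases mem_attachRoot.1 ha' with ha' | ⟨ha', -⟩
    · exact (Prod.mk.inj ha).1.trans (Prod.mk.inj ha').1.symm
    · exact absurd ((Prod.mk.inj ha).2 ▸ ha') (hT.root_no_parent a')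
    · exact absurd ((Prod.mk.inj ha').2 ▸ ha) (hT.root_no_parent a)
    · exact hT.parent_unique a a' w ha ha'
  root_no_parent a ha := by
    rcases mem_attachRoot.1 ha with ha | ⟨-, ha⟩
    exacts [hne (Prod.mk.inj ha).2, ha rfl]
  reach_root p hp := by
    rcases mem_attachRoot.1 hp with rfl | ⟨hp, -⟩
    exacts [.refl, reach_attachRoot_root (hT.reach_root p hp)]

lemma spans_attachRoot {S : Set V} (hS : Spans (↑T) u S) : Spans (↑(attachRoot v u T)) v S :=
  fun d hd => reach_attachRoot_root (hS d hd)

lemma treeCost_attachRoot_le {e : V → V → ℝ} {x : V → ℝ} {S : Set V}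
    (he : ∀ i j, E i j → 0 ≤ e i j) (hx : ∀ d ∈ S, 0 ≤ x d)
    (hT : IsRootedTree E u ↑T) (hS : Spans (↑T) u S) (hvu : E v u) :
    treeCost e x S (attachRoot v u T) ≤ treeCost e x S T + sSup (x '' S) * e v u := by
  set T' := attachRoot v u T
  have hSfin : S.Finite := (finite_setOf_reach T u).subset hS
  have hvuT : (v, u) ∉ T.filter fun p => p.2 ≠ v :=
    fun h => hT.root_no_parent v (Finset.mem_filter.1 h).1
  have hnew : e v u * maxBelow (↑T') S x u ≤ sSup (x '' S) * e v u := by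
    rw [mul_comm]
    exact mul_le_mul_of_nonneg_right (maxBelow_le_sSup hSfin hx _ _) (he v u hvu)
  have hold : ∑ p ∈ T.filter (fun p => p.2 ≠ v), e p.1 p.2 * maxBelow (↑T') S x p.2
      ≤ treeCost e x S T :=
    calc _ ≤ ∑ p ∈ T.filter (fun p => p.2 ≠ v), e p.1 p.2 * maxBelow (↑T) S x p.2 := by
          refine Finset.sum_le_sum fun p hp => ?_
          obtain ⟨hpT, hpv⟩ := Finset.mem_filter.1 hp
          exact mul_le_mul_of_nonneg_left
            (maxBelow_le_maxBelow_of_reach hx fun d => reach_of_reach_attachRoot hpv)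
            (he _ _ (hT.edges p hpT))
      _ ≤ treeCost e x S T :=
          Finset.sum_le_sum_of_subset_of_nonneg (Finset.filter_subset _ T) fun p hp _ =>
            mul_nonneg (he _ _ (hT.edges p hp)) (maxBelow_nonneg hx _ _)
  have hsplit : treeCost e x S T' = e v u * maxBelow (↑T') S x u +
      ∑ p ∈ T.filter (fun p => p.2 ≠ v), e p.1 p.2 * maxBelow (↑T') S x p.2 :=
    Finset.sum_insert hvuT
  linarith

end attachRoot

theorem stmt8_general (E : V → V → Prop) (hE : ∀ a b, E a b → E b a)
    (e : V → V → ℝ) (hepos : ∀ i j, E i j → 0 < e i j)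
    (D : Set V) (x : V → ℝ) (hx : ∀ d ∈ D, 0 < x d)
    (S : Set V) (hSD : S ⊆ D)
    (v u : V) (hvu : E v u) :
    delta E e x v S ≤ delta E e x u S + sSup (x '' S) * e v u := by
  have hxS : ∀ d ∈ S, 0 ≤ x d := fun d hd => (hx d (hSD hd)).le
  have he : ∀ i j, E i j → 0 ≤ e i j := fun i j h => (hepos i j h).le
  have hc : 0 ≤ sSup (x '' S) * e v u :=
    mul_nonneg (Real.sSup_nonneg (Set.forall_mem_image.2 hxS)) (he v u hvu)
  rcases eq_or_ne v u with rfl | hne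
  · exact le_add_of_nonneg_right hc
  refine sInf_le_sInf_add ⟨0, ?_⟩ hc ?_ ?_
  · rintro _ ⟨T, hT, -, rfl⟩
    exact treeCost_nonneg he hxS hT
  · rintro ⟨_, T, hT, hS, rfl⟩
    exact ⟨_, attachRoot u v T, isRootedTree_attachRoot hT (hE v u hvu) hne.symm,
      spans_attachRoot hS, rfl⟩
  · rintro _ ⟨T, hT, hS, rfl⟩
    refine ⟨_, ⟨attachRoot v u T, ?_, spans_attachRoot hS, rfl⟩,
      treeCost_attachRoot_le he hxS hT hS hvu⟩
    exact isRootedTree_attachRoot hT hvu hne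

/-- the optimal Steiner-flow cost satisfies the edge-extension
recurrence `H(v,S) ≤ H(u,S) + (max_{d∈S} x d) · e(v,u)` for every edge `{v,u}`. -/
theorem stmt8 (E : V → V → Prop) (hE : ∀ a b, E a b → E b a)
    (hconn : ∀ a b : V, Relation.ReflTransGen E a b)
    (e : V → V → ℝ) (hepos : ∀ i j, E i j → 0 < e i j)
    (D : Set V) (x : V → ℝ) (hx : ∀ d ∈ D, 0 < x d)
    (S : Set V) (hSD : S ⊆ D) (hS : S.Nonempty)
    (v u : V) (hvu : E v u) :
    delta E e x v S ≤ delta E e x u S + sSup (x '' S) * e v u :=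
  stmt8_general E hE e hepos D x hx S hSD v u hvu

end OST
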